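/- arXiv:1209.6481 — 2 statements merged into one kernel-verified Lean document; each statement's English description precedes it below -/
import Mathlib

section
/- Fix a real α > 1 and an integer m ≥ 1. Suppose the instance is pure-laminar, i.e., for any two jobs with r_j ≤ r_{j'} one has d_j ≥ d_{j'}. Then for every feasible preemptive schedule S_pr on m processors there exists a feasible non-preemptive schedule S_npr on m processors with E(S_npr) ≤ (2·(2 − 1/m))^(α−1) · E(S_pr). In particular this yields a (2(2 − 1/m))^(α−1)-approximation for the problem S|pure-laminar|E. -/
/-! All jobs of a pure-laminar instance are alive at `t₀ = min_j d_j`. Let `T_j = w_j / s_j` be the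
preemptive processing time of job `j`; call `j` a left job if at least half of it lies before
`t₀`, a right job otherwise, and give every job the length `T_j / (2 (2 - 1/m))`, which multiplies
every speed by the same factor `2 (2 - 1/m)`. Left jobs are list-scheduled backwards from `t₀` in
order of non-increasing release date, right jobs forwards from `t₀` in order of non-decreasing
deadline. By Graham's argument a job ends at most `(1/m) ∑ ℓ + ℓ_j` away from `t₀`, the sum
running over the jobs placed before it. These have release dates at least `r_j` (resp. deadlines
at most `d_j`), so their parts before (resp. after) `t₀`, each at least half of their processing
time, were run on `m` processors inside `[r_j, t₀]` (resp. `[t₀, d_j]`); this bounds the distance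
by `t₀ - r_j` (resp. `d_j - t₀`). -/

open MeasureTheory Set

/-- A feasible preemptive (migratory) schedule on `m` identical speed-scalable
processors, for an instance given by jobs `ι` with works `w`, release dates `r` and
deadlines `d`: each job `j` gets a constant speed `speed j > 0` and, on each processor
`i`, a measurable set `A i j ⊆ [r j, d j]` of execution times; distinct jobs are
disjoint on each processor, a job never runs on two processors simultaneously, and the
total execution time times the speed equals the work. -/
structure PreemptiveSchedule (ι : Type) [Fintype ι] (m : ℕ) (w r d : ι → ℝ) where
  speed : ι → ℝ
  A : Fin m → ι → Set ℝ
  speed_pos : ∀ j, 0 < speed j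
  measurableSet_A : ∀ i j, MeasurableSet (A i j)
  A_subset : ∀ i j, A i j ⊆ Icc (r j) (d j)
  disjoint_jobs : ∀ i, ∀ j j', j ≠ j' → Disjoint (A i j) (A i j')
  disjoint_procs : ∀ j, ∀ i i', i ≠ i' → Disjoint (A i j) (A i' j)
  work_done : ∀ j, speed j * ∑ i, (volume (A i j)).toReal = w j

/-- The energy consumption of a preemptive schedule: each job `j` of work `w j` run at
constant speed `s_j` consumes energy `w j * s_j ^ (α - 1)`. -/
noncomputable def pEnergy {ι : Type} [Fintype ι] {m : ℕ} {w r d : ι → ℝ}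
    (α : ℝ) (S : PreemptiveSchedule ι m w r d) : ℝ :=
  ∑ j, w j * S.speed j ^ (α - 1)

/-- A feasible non-preemptive schedule on `m` identical speed-scalable processors:
each job `j` is assigned a processor `proc j`, a start time `start j ≥ r j` and a
processing time `len j > 0` with `start j + len j ≤ d j`, and the open execution
intervals of distinct jobs on the same processor are pairwise disjoint. -/
structure NPSchedule (ι : Type) [Fintype ι] (m : ℕ) (w r d : ι → ℝ) where
  proc : ι → Fin m
  start : ι → ℝ
  len : ι → ℝ
  len_pos : ∀ j, 0 < len j
  start_ge : ∀ j, r j ≤ start j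
  end_le : ∀ j, start j + len j ≤ d j
  disjoint_jobs : ∀ j j', j ≠ j' → proc j = proc j' →
    Disjoint (Set.Ioo (start j) (start j + len j)) (Set.Ioo (start j') (start j' + len j'))

/-- The energy consumption of a non-preemptive schedule: job `j` runs at constant speed
`w j / len j` and consumes energy `w j * (w j / len j) ^ (α - 1)`. -/
noncomputable def npEnergy {ι : Type} [Fintype ι] {m : ℕ} {w r d : ι → ℝ}
    (α : ℝ) (S : NPSchedule ι m w r d) : ℝ :=
  ∑ j, w j * (w j / S.len j) ^ (α - 1)

open Finset

section Packing

variable {ι : Type} {m : ℕ}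

def IsPacking (s : Finset ι) (proc : ι → Fin m) (off ℓ W : ι → ℝ) : Prop :=
  (∀ j ∈ s, 0 ≤ off j ∧ off j + ℓ j ≤ W j) ∧
    ∀ j ∈ s, ∀ j' ∈ s, j ≠ j' → proc j = proc j' →
      off j + ℓ j ≤ off j' ∨ off j' + ℓ j' ≤ off j

/-- Graham's list scheduling, in order of non-increasing `key`: each job is put on a least loaded
processor, so it starts no later than the average load of the jobs placed before it. -/
theorem exists_isPacking_of_greedy [DecidableEq ι] {α : Type*} [LinearOrder α] (hm : 0 < m)
    (key : ι → α) {ℓ W : ι → ℝ} (hℓ : ∀ j, 0 ≤ ℓ j) (s : Finset ι)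
    (h : ∀ j ∈ s, ∀ t ⊆ s, j ∉ t → (∀ x ∈ t, key j ≤ key x) → (∑ x ∈ t, ℓ x) / m + ℓ j ≤ W j) :
    ∃ (proc : ι → Fin m) (off : ι → ℝ), IsPacking s proc off ℓ W := by
  suffices ∃ (proc : ι → Fin m) (off : ι → ℝ) (load : Fin m → ℝ), IsPacking s proc off ℓ W ∧
      (∀ i, 0 ≤ load i) ∧ ∑ i, load i = ∑ j ∈ s, ℓ j ∧ ∀ j ∈ s, off j + ℓ j ≤ load (proc j) by
    obtain ⟨proc, off, -, hpack, -⟩ := this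
    exact ⟨proc, off, hpack⟩
  induction s using Finset.induction_on_min_value key with
  | empty => exact ⟨fun _ => ⟨0, hm⟩, 0, 0, by simp [IsPacking]⟩
  | insert a s has hmin ih =>
    obtain ⟨proc, off, load, ⟨hbound, hdisj⟩, hload, hsum, hfit⟩ :=
      ih fun j hj t hts => h j (mem_insert_of_mem hj) t (hts.trans (subset_insert a s))
    have : Nonempty (Fin m) := ⟨⟨0, hm⟩⟩
    obtain ⟨i₀, -, hi₀⟩ : ∃ i ∈ Finset.univ, load i ≤ (∑ i, load i) / m := by
      refine exists_le_of_sum_le Finset.univ_nonempty (le_of_eq ?_)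
      rw [sum_const, card_univ, Fintype.card_fin, nsmul_eq_mul,
        mul_div_cancel₀ _ (by exact_mod_cast hm.ne')]
    have ha : load i₀ + ℓ a ≤ W a := by
      have := h a (mem_insert_self a s) s (subset_insert a s) has hmin
      rw [← hsum] at this
      linarith
    have hbefore : ∀ j ∈ s, proc j = i₀ → off j + ℓ j ≤ load i₀ := fun j hj hji =>
      hji ▸ hfit j hj
    have hne : ∀ j ∈ s, j ≠ a := fun j hj hja => has (hja ▸ hj)
    have hsingle : ∀ i, 0 ≤ (Pi.single i₀ (ℓ a) : Fin m → ℝ) i := fun i => by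
      rw [Pi.single_apply]; split_ifs <;> simp [hℓ a]
    refine ⟨Function.update proc a i₀, Function.update off a (load i₀),
      load + Pi.single i₀ (ℓ a), ⟨?_, ?_⟩, ?_, ?_, ?_⟩
    · intro j hj
      rcases mem_insert.1 hj with rfl | hj
      · simpa using ⟨hload i₀, ha⟩
      · simpa [hne j hj] using hbound j hj
    · intro j hj j' hj' hjj' hproc
      rcases mem_insert.1 hj with rfl | hjs <;> rcases mem_insert.1 hj' with rfl | hjs'
      · exact absurd rfl hjj'
      · simp only [Function.update_self, Function.update_of_ne (hne j' hjs')] at hproc ⊢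
        exact Or.inr (hbefore j' hjs' hproc.symm)
      · simp only [Function.update_self, Function.update_of_ne (hne j hjs)] at hproc ⊢
        exact Or.inl (hbefore j hjs hproc)
      · simp only [Function.update_of_ne (hne j hjs), Function.update_of_ne (hne j' hjs')]
          at hproc ⊢
        exact hdisj j hjs j' hjs' hjj' hproc
    · exact fun i => add_nonneg (hload i) (hsingle i)
    · simp [sum_add_distrib, hsum, sum_insert has, add_comm]
    · intro j hj
      rcases mem_insert.1 hj with rfl | hj
      · simp
      · simp only [Function.update_of_ne (hne j hj), Pi.add_apply]
        linarith [hfit j hj, hsingle (proc j)]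

end Packing

theorem zero_lt_two_sub_one_div {m : ℕ} (hm : 1 ≤ m) : 0 < 2 - 1 / (m : ℝ) := by
  have : 1 / (m : ℝ) ≤ 1 := div_le_one_of_le₀ (by exact_mod_cast hm) (Nat.cast_nonneg m)
  linarith

/-- In Graham's test the job itself counts fully and the jobs before it with weight `1/m`,
whence the factor `2 - 1/m`. -/
theorem exists_isPacking_of_window {ι : Type} [DecidableEq ι] {α : Type*} [LinearOrder α]
    {m : ℕ} (hm : 1 ≤ m) (key : ι → α) {τ ℓ W : ι → ℝ} {s : Finset ι} (hℓ₀ : ∀ j, 0 ≤ ℓ j)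
    (hℓ : ∀ j ∈ s, ℓ j ≤ τ j / (2 - 1 / m))
    (hwin : ∀ j ∈ s, ∀ t ⊆ s, (∀ x ∈ t, key j ≤ key x) → ∑ x ∈ t, τ x ≤ m * W j)
    (hτ : ∀ j ∈ s, τ j ≤ W j) :
    ∃ (proc : ι → Fin m) (off : ι → ℝ), IsPacking s proc off ℓ W := by
  refine exists_isPacking_of_greedy hm key hℓ₀ s fun j hj t hts hjt hkey => ?_
  have hM : (1 : ℝ) ≤ m := by exact_mod_cast hm
  have hq := zero_lt_two_sub_one_div hm
  have hsum : ∑ x ∈ t, ℓ x ≤ (∑ x ∈ t, τ x) / (2 - 1 / m) := by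
    rw [sum_div]
    exact sum_le_sum fun x hx => hℓ x (hts hx)
  have hwinj : ∑ x ∈ t, τ x + τ j ≤ m * W j := by
    have := hwin j hj (insert j t) (insert_subset hj hts)
      (forall_mem_insert _ _ _ |>.2 ⟨le_rfl, hkey⟩)
    rwa [sum_insert hjt, add_comm] at this
  have hq' : (2 - 1 / (m : ℝ)) * m = 2 * m - 1 := by field_simp
  calc (∑ x ∈ t, ℓ x) / m + ℓ j
      ≤ (∑ x ∈ t, τ x) / (2 - 1 / m) / m + τ j / (2 - 1 / m) := by
        gcongr
        exact hℓ j hj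
    _ = (∑ x ∈ t, τ x + τ j + (m - 1) * τ j) / (2 * m - 1) := by
        rw [← hq']
        field_simp
        ring
    _ ≤ (m * W j + (m - 1) * W j) / (2 * m - 1) := by
        have := mul_le_mul_of_nonneg_left (hτ j hj) (by linarith : (0 : ℝ) ≤ m - 1)
        gcongr ?_ / _
        · linarith
        · linarith
    _ = W j := by
        rw [div_eq_iff (by linarith)]
        ring

theorem MeasureTheory.sum_measureReal_le_of_pairwiseDisjoint {X κ : Type*} [MeasurableSpace X]
    {μ : Measure X} {s : Finset κ} {B : κ → Set X} {V : Set X} (hV : μ V ≠ ⊤)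
    (hB : ∀ k ∈ s, MeasurableSet (B k)) (hd : (s : Set κ).PairwiseDisjoint B)
    (hsub : ∀ k ∈ s, B k ⊆ V) :
    ∑ k ∈ s, μ.real (B k) ≤ μ.real V := by
  rw [← measureReal_biUnion_finset hd hB fun k hk => measure_ne_top_of_subset (hsub k hk) hV]
  exact measureReal_mono (iUnion₂_subset hsub) hV

namespace PreemptiveSchedule

variable {ι : Type} [Fintype ι] {m : ℕ} {w r d : ι → ℝ} (S : PreemptiveSchedule ι m w r d)

noncomputable def procTime (j : ι) (U : Set ℝ) : ℝ := ∑ i, volume.real (S.A i j ∩ U)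

theorem volume_A_ne_top (i : Fin m) (j : ι) : volume (S.A i j) ≠ ⊤ :=
  measure_ne_top_of_subset (S.A_subset i j) measure_Icc_lt_top.ne

theorem procTime_Iic_add_procTime_Ioi (j : ι) (t : ℝ) :
    S.procTime j (Iic t) + S.procTime j (Ioi t) = w j / S.speed j := by
  rw [eq_div_iff (S.speed_pos j).ne', ← S.work_done j, mul_comm, procTime, procTime,
    ← sum_add_distrib]
  refine congrArg _ (sum_congr rfl fun i _ => ?_)
  rw [← compl_Iic, ← sdiff_eq,
    measureReal_inter_add_sdiff measurableSet_Iic (S.volume_A_ne_top i j), measureReal_def]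

theorem sum_procTime_le {J : Finset ι} {U : Set ℝ} (hU : MeasurableSet U) {a b : ℝ} (hab : a ≤ b)
    (h : ∀ j ∈ J, ∀ i, S.A i j ∩ U ⊆ Icc a b) :
    ∑ j ∈ J, S.procTime j U ≤ m * (b - a) := by
  unfold procTime
  rw [sum_comm]
  calc ∑ i, ∑ j ∈ J, volume.real (S.A i j ∩ U)
      ≤ ∑ _i : Fin m, volume.real (Icc a b) := sum_le_sum fun i _ =>
        sum_measureReal_le_of_pairwiseDisjoint measure_Icc_lt_top.ne
          (fun j _ => (S.measurableSet_A i j).inter hU)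
          (fun j _ j' _ hjj' =>
            (S.disjoint_jobs i j j' hjj').mono inter_subset_left inter_subset_left)
          fun j hj => h j hj i
    _ = m * (b - a) := by simp [Real.volume_real_Icc_of_le hab]; ring

theorem procTime_le {j : ι} {U : Set ℝ} (hU : MeasurableSet U) {a b : ℝ} (hab : a ≤ b)
    (h : ∀ i, S.A i j ∩ U ⊆ Icc a b) :
    S.procTime j U ≤ b - a := by
  rw [← Real.volume_real_Icc_of_le hab]
  exact sum_measureReal_le_of_pairwiseDisjoint measure_Icc_lt_top.ne
    (fun i _ => (S.measurableSet_A i j).inter hU)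
    (fun i _ i' _ hii' => (S.disjoint_procs j i i' hii').mono inter_subset_left inter_subset_left)
    fun i _ => h i

theorem exists_isPacking_before [DecidableEq ι] (hm : 1 ≤ m) {t₀ : ℝ} (ht₀ : ∀ j, r j ≤ t₀)
    {s : Finset ι} {ℓ : ι → ℝ} (hℓ₀ : ∀ j, 0 ≤ ℓ j)
    (hℓ : ∀ j ∈ s, ℓ j ≤ S.procTime j (Iic t₀) / (2 - 1 / m)) :
    ∃ (proc : ι → Fin m) (off : ι → ℝ), IsPacking s proc off ℓ fun j => t₀ - r j :=
  exists_isPacking_of_window hm r hℓ₀ hℓ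
    (fun j _ _ _ hkey => S.sum_procTime_le measurableSet_Iic (ht₀ j) fun x hx i _ hy =>
      ⟨(hkey x hx).trans (S.A_subset i x hy.1).1, hy.2⟩)
    fun j _ => S.procTime_le measurableSet_Iic (ht₀ j) fun i _ hy =>
      ⟨(S.A_subset i j hy.1).1, hy.2⟩

theorem exists_isPacking_after [DecidableEq ι] (hm : 1 ≤ m) {t₀ : ℝ} (ht₀ : ∀ j, t₀ ≤ d j)
    {s : Finset ι} {ℓ : ι → ℝ} (hℓ₀ : ∀ j, 0 ≤ ℓ j)
    (hℓ : ∀ j ∈ s, ℓ j ≤ S.procTime j (Ioi t₀) / (2 - 1 / m)) :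
    ∃ (proc : ι → Fin m) (off : ι → ℝ), IsPacking s proc off ℓ fun j => d j - t₀ :=
  exists_isPacking_of_window hm (fun j => -d j) hℓ₀ hℓ
    (fun j _ _ _ hkey => S.sum_procTime_le measurableSet_Ioi (ht₀ j) fun x hx i _ hy =>
      ⟨hy.2.le, (S.A_subset i x hy.1).2.trans (neg_le_neg_iff.1 (hkey x hx))⟩)
    fun j _ => S.procTime_le measurableSet_Ioi (ht₀ j) fun i _ hy =>
      ⟨hy.2.le, (S.A_subset i j hy.1).2⟩

end PreemptiveSchedule

section Construction

variable {ι : Type} [Fintype ι] {m : ℕ} {w r d : ι → ℝ}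

theorem exists_npSchedule_of_isPacking [DecidableEq ι] {t₀ : ℝ} (ht₀ : ∀ j, r j ≤ t₀ ∧ t₀ ≤ d j)
    {ℓ : ι → ℝ} (hℓ : ∀ j, 0 < ℓ j) {s : Finset ι} {procL procR : ι → Fin m}
    {offL offR : ι → ℝ} (hL : IsPacking s procL offL ℓ fun j => t₀ - r j)
    (hR : IsPacking sᶜ procR offR ℓ fun j => d j - t₀) :
    ∃ N : NPSchedule ι m w r d, N.len = ℓ := by
  have hdisj {a b c e : ℝ} (h : b ≤ c) : Disjoint (Ioo a b) (Ioo c e) :=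
    Set.Ioo_disjoint_Ioo.2 ((min_le_left _ _).trans (h.trans (le_max_right _ _)))
  have hR' : ∀ j ∉ s, 0 ≤ offR j ∧ offR j + ℓ j ≤ d j - t₀ := fun j hj =>
    hR.1 j (mem_compl.2 hj)
  refine ⟨{ proc := fun j => if j ∈ s then procL j else procR j
            start := fun j => if j ∈ s then t₀ - offL j - ℓ j else t₀ + offR j
            len := ℓ
            len_pos := hℓ
            start_ge := fun j => ?_
            end_le := fun j => ?_
            disjoint_jobs := fun j j' hjj' hproc => ?_ }, rfl⟩
  · split_ifs with hj
    · linarith [hL.1 j hj]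
    · linarith [hR' j hj, ht₀ j]
  · split_ifs with hj
    · linarith [hL.1 j hj, ht₀ j]
    · linarith [hR' j hj]
  · by_cases hj : j ∈ s <;> by_cases hj' : j' ∈ s <;>
      simp only [hj, hj', if_true, if_false] at hproc ⊢
    · rcases hL.2 j hj j' hj' hjj' hproc with h | h
      · exact (hdisj (by linarith)).symm
      · exact hdisj (by linarith)
    · exact hdisj (by linarith [hL.1 j hj, hR' j' hj'])
    · exact (hdisj (by linarith [hL.1 j' hj', hR' j hj])).symm
    · rcases hR.2 j (mem_compl.2 hj) j' (mem_compl.2 hj') hjj' hproc with h | h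
      · exact hdisj (by linarith)
      · exact (hdisj (by linarith)).symm

theorem PreemptiveSchedule.exists_npSchedule_len_eq (hm : 1 ≤ m) (hw : ∀ j, 0 < w j) {t₀ : ℝ}
    (ht₀ : ∀ j, r j ≤ t₀ ∧ t₀ ≤ d j) (S : PreemptiveSchedule ι m w r d) :
    ∃ N : NPSchedule ι m w r d, ∀ j, N.len j = w j / S.speed j / (2 * (2 - 1 / m)) := by
  classical
  have hq := zero_lt_two_sub_one_div hm
  set ℓ := fun j => w j / S.speed j / (2 * (2 - 1 / (m : ℝ)))
  have hℓ : ∀ j, 0 < ℓ j := fun j => by have := S.speed_pos j; have := hw j; positivity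
  have hsplit := S.procTime_Iic_add_procTime_Ioi (t := t₀)
  have hℓ_le {τ : ι → ℝ} {j : ι} (h : w j / S.speed j ≤ 2 * τ j) : ℓ j ≤ τ j / (2 - 1 / m) := by
    rw [div_le_div_iff₀ (by positivity) hq]
    nlinarith
  set s := Finset.univ.filter fun j => S.procTime j (Ioi t₀) ≤ S.procTime j (Iic t₀)
  obtain ⟨procL, offL, hL⟩ := S.exists_isPacking_before hm (fun j => (ht₀ j).1) (s := s)
    (fun j => (hℓ j).le) fun j hj => hℓ_le (τ := fun j => S.procTime j (Iic t₀))
      (by linarith [hsplit j, (mem_filter.1 hj).2])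
  obtain ⟨procR, offR, hR⟩ := S.exists_isPacking_after hm (fun j => (ht₀ j).2) (s := sᶜ)
    (fun j => (hℓ j).le) fun j hj => hℓ_le (τ := fun j => S.procTime j (Ioi t₀)) (by
      have : ¬S.procTime j (Ioi t₀) ≤ S.procTime j (Iic t₀) := by simpa [s] using hj
      linarith [hsplit j])
  obtain ⟨N, hN⟩ := exists_npSchedule_of_isPacking ht₀ hℓ hL hR
  exact ⟨N, fun j => congrFun hN j⟩

theorem npEnergy_eq_of_len_eq (α : ℝ) {c : ℝ} (hc : 0 < c) {N : NPSchedule ι m w r d}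
    {S : PreemptiveSchedule ι m w r d} (hlen : ∀ j, N.len j = w j / S.speed j / c) :
    npEnergy α N = c ^ (α - 1) * pEnergy α S := by
  rw [npEnergy, pEnergy, mul_sum]
  refine sum_congr rfl fun j _ => ?_
  rcases eq_or_ne (w j) 0 with hwj | hwj
  · simp [hwj]
  · have hs := S.speed_pos j
    rw [hlen, show w j / (w j / S.speed j / c) = c * S.speed j by field_simp,
      Real.mul_rpow hc.le hs.le]
    ring

end Construction

theorem exists_forall_le_and_le_of_laminar {ι : Type} [Fintype ι] {r d : ι → ℝ}
    (hrd : ∀ j, r j ≤ d j) (hlaminar : ∀ j j', r j ≤ r j' → d j' ≤ d j) :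
    ∃ t, ∀ j, r j ≤ t ∧ t ≤ d j := by
  rcases isEmpty_or_nonempty ι with _ | _
  · exact ⟨0, isEmptyElim⟩
  obtain ⟨j₀, -, hj₀⟩ := exists_min_image Finset.univ d Finset.univ_nonempty
  refine ⟨d j₀, fun j => ⟨?_, hj₀ j (mem_univ j)⟩⟩
  rcases le_total (r j) (r j₀) with h | h
  · exact h.trans (hrd j₀)
  · exact (hrd j).trans (hlaminar j₀ j h)

theorem pure_laminar_instances_general (ι : Type) [Fintype ι] (α : ℝ)
    (m : ℕ) (hm : 1 ≤ m) (w r d : ι → ℝ)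
    (hw : ∀ j, 0 < w j) (hrd : ∀ j, r j < d j)
    (hlaminar : ∀ j j', r j ≤ r j' → d j' ≤ d j)
    (Spr : PreemptiveSchedule ι m w r d) :
    ∃ Snpr : NPSchedule ι m w r d,
      npEnergy α Snpr ≤ (2 * (2 - 1 / (m : ℝ))) ^ (α - 1) * pEnergy α Spr := by
  obtain ⟨t₀, ht₀⟩ := exists_forall_le_and_le_of_laminar (fun j => (hrd j).le) hlaminar
  obtain ⟨N, hN⟩ := Spr.exists_npSchedule_len_eq hm hw ht₀
  exact ⟨N, (npEnergy_eq_of_len_eq α (by linarith [zero_lt_two_sub_one_div hm]) hN).le⟩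

/-- Corollary (pure-laminar instances): for `α > 1` and `m ≥ 1` processors, if the
instance is pure-laminar (for any two jobs, `r j ≤ r j'` implies `d j ≥ d j'`), then
for every feasible preemptive schedule there exists a feasible non-preemptive schedule
whose energy is at most `(2(2 - 1/m))^(α-1)` times the energy of the preemptive
schedule. This yields a `(2(2 - 1/m))^(α-1)`-approximation for `S|pure-laminar|E`. -/
theorem pure_laminar_instances (ι : Type) [Fintype ι] (α : ℝ) (hα : 1 < α)
    (m : ℕ) (hm : 1 ≤ m) (w r d : ι → ℝ)
    (hw : ∀ j, 0 < w j) (hr : ∀ j, 0 ≤ r j) (hrd : ∀ j, r j < d j)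
    (hlaminar : ∀ j j', r j ≤ r j' → d j' ≤ d j)
    (Spr : PreemptiveSchedule ι m w r d) :
    ∃ Snpr : NPSchedule ι m w r d,
      npEnergy α Snpr ≤ (2 * (2 - 1 / (m : ℝ))) ^ (α - 1) * pEnergy α Spr :=
  pure_laminar_instances_general ι α m hm w r d hw hrd hlaminar Spr
end

section
/- Fix a real α > 1 and an integer m ≥ 1, and let the instance be agreeable (for any two jobs, r_j ≤ r_{j'} implies d_j ≤ d_{j'}). Then for every feasible preemptive-no-migration schedule S on m processors there exists a feasible non-preemptive schedule on m processors in which every job j has processing time p_j equal to its total execution time in S; in particular this non-preemptive schedule has the same energy as S, and the minimum non-preemptive energy equals the minimum preemptive-no-migration energy for agreeable instances. -/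
open MeasureTheory Set

/-- A feasible preemptive-no-migration schedule on `m` identical speed-scalable
processors: each job `j` gets a single processor `proc j`, a measurable set
`A j ⊆ [r j, d j]` of execution times (disjoint from those of other jobs on the same
processor) and a constant speed `speed j > 0` with `speed j · λ(A j) = w j`. -/
structure NoMigSchedule (ι : Type) [Fintype ι] (m : ℕ) (w r d : ι → ℝ) where
  proc : ι → Fin m
  A : ι → Set ℝ
  speed : ι → ℝ
  speed_pos : ∀ j, 0 < speed j
  measurableSet_A : ∀ j, MeasurableSet (A j)
  A_subset : ∀ j, A j ⊆ Icc (r j) (d j)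
  disjoint_jobs : ∀ j j', j ≠ j' → proc j = proc j' → Disjoint (A j) (A j')
  work_done : ∀ j, speed j * (volume (A j)).toReal = w j

/-- The energy consumption of a preemptive-no-migration schedule. -/
noncomputable def nmEnergy {ι : Type} [Fintype ι] {m : ℕ} {w r d : ι → ℝ}
    (α : ℝ) (S : NoMigSchedule ι m w r d) : ℝ :=
  ∑ j, w j * S.speed j ^ (α - 1)

/-!
Order the jobs by release date and, on each processor of `S`, run its jobs back to back in this
order, each as early as possible and for its total execution time in `S`. The start of a job `j`
is then `r t` plus the execution times of the jobs from `t` up to `j` on that processor, for some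
earlier `t`; agreeability confines all those jobs to `[r t, d j]` in `S`, so `j` still meets its
deadline.
-/

open scoped ENNReal

lemma sum_measureReal_le_of_subset {α ι : Type*} [MeasurableSpace α] {μ : Measure α}
    {s : Finset ι} {A : ι → Set α} {B : Set α} (hA : ∀ i ∈ s, MeasurableSet (A i))
    (hd : (s : Set ι).PairwiseDisjoint A) (hAB : ∀ i ∈ s, A i ⊆ B) (hB : μ B ≠ ∞) :
    ∑ i ∈ s, μ.real (A i) ≤ μ.real B := by
  rw [← measureReal_biUnion_finset hd hA fun i hi ↦ measure_ne_top_of_subset (hAB i hi) hB]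
  exact measureReal_mono (iUnion₂_subset hAB) hB

lemma exists_linearOrder_monotone {ι α : Type*} [LinearOrder α] (f : ι → α) :
    ∃ _ : LinearOrder ι, Monotone f := by
  let key : ι → α ×ₗ Cardinal := fun i ↦ toLex (f i, embeddingToCardinal i)
  have key_inj : key.Injective := fun i j h ↦
    embeddingToCardinal.injective (congrArg Prod.snd (toLex.injective h))
  let : LinearOrder ι := LinearOrder.lift' key key_inj
  refine ⟨this, fun i j hij ↦ ?_⟩
  rcases Prod.Lex.le_iff.1 hij with h | h
  exacts [h.le, h.1.le]

section ListScheduling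

variable {ι κ : Type*} [Fintype ι] [LinearOrder ι] [DecidableEq κ] (c : ι → κ) (r p : ι → ℝ)

def machineWindow (t j : ι) : Finset ι := {i | t ≤ i ∧ i < j ∧ c i = c j}

/-- Closed form of earliest-start list scheduling, where the jobs of each machine run back to back
in the order of `ι`: `j` starts at `max_{t ≤ j} (r t + ∑_{t ≤ i < j} p i)`, all indices ranging
over the machine `c j`. -/
def listStart (j : ι) : ℝ :=
  Finset.sup' {t | t ≤ j ∧ c t = c j} ⟨j, by simp⟩ fun t ↦ r t + ∑ i ∈ machineWindow c t j, p i

variable {c r p}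

lemma le_listStart (hp : 0 ≤ p) (j : ι) : r j ≤ listStart c r p j := by
  have hj : r j + ∑ i ∈ machineWindow c j j, p i ≤ listStart c r p j :=
    Finset.le_sup' (fun t ↦ r t + ∑ i ∈ machineWindow c t j, p i) (by simp)
  linarith [Finset.sum_nonneg fun i (_ : i ∈ machineWindow c j j) ↦ hp i]

lemma listStart_add_le {j : ι} {D : ℝ}
    (h : ∀ t ≤ j, c t = c j → r t + ∑ i ∈ machineWindow c t j, p i + p j ≤ D) :
    listStart c r p j + p j ≤ D := by
  suffices listStart c r p j ≤ D - p j by linarith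
  refine Finset.sup'_le _ _ fun t ht ↦ ?_
  simp only [Finset.mem_filter, Finset.mem_univ, true_and] at ht
  linarith [h t ht.1 ht.2]

lemma listStart_add_le_listStart (hp : 0 ≤ p) {j j' : ι} (hjj' : j < j') (hc : c j = c j') :
    listStart c r p j + p j ≤ listStart c r p j' := by
  refine listStart_add_le fun t htj htc ↦ ?_
  have hsub : insert j (machineWindow c t j) ⊆ machineWindow c t j' := by
    intro i hi
    simp only [machineWindow, Finset.mem_insert, Finset.mem_filter, Finset.mem_univ,
      true_and] at hi ⊢
    rcases hi with rfl | ⟨hti, hij, hic⟩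
    exacts [⟨htj, hjj', hc⟩, ⟨hti, hij.trans hjj', hic.trans hc⟩]
  have hmono := Finset.sum_le_sum_of_subset_of_nonneg hsub fun i _ _ ↦ hp i
  have ht' : r t + ∑ i ∈ machineWindow c t j', p i ≤ listStart c r p j' :=
    Finset.le_sup' (fun t ↦ r t + ∑ i ∈ machineWindow c t j', p i)
      (by simpa using ⟨htj.trans hjj'.le, htc.trans hc⟩)
  rw [Finset.sum_insert (by simp [machineWindow])] at hmono
  linarith

lemma disjoint_Ioo_listStart (hp : 0 ≤ p) {j j' : ι} (hne : j ≠ j') (hc : c j = c j') :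
    Disjoint (Ioo (listStart c r p j) (listStart c r p j + p j))
      (Ioo (listStart c r p j') (listStart c r p j' + p j')) := by
  rcases hne.lt_or_gt with h | h
  · exact (Iio_disjoint_Ici (listStart_add_le_listStart hp h hc)).mono
      Ioo_subset_Iio_self (Ioo_subset_Ioi_self.trans Ioi_subset_Ici_self)
  · exact ((Iio_disjoint_Ici (listStart_add_le_listStart hp h hc.symm)).mono
      Ioo_subset_Iio_self (Ioo_subset_Ioi_self.trans Ioi_subset_Ici_self)).symm

end ListScheduling

section Schedules

variable {ι : Type} [Fintype ι] {m : ℕ} {w r d : ι → ℝ}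

lemma NoMigSchedule.measureReal_A_pos (hw : ∀ j, 0 < w j) (S : NoMigSchedule ι m w r d)
    (j : ι) : 0 < volume.real (S.A j) :=
  pos_of_mul_pos_right ((S.work_done j).symm ▸ hw j) (S.speed_pos j).le

/-- By agreeability, the jobs of one machine released in `[r t, r j]` all run inside
`[r t, d j]`, so their total execution time is at most `d j - r t`. -/
lemma NoMigSchedule.add_sum_machineWindow_le_deadline [LinearOrder ι] (hr : Monotone r)
    (hrd : ∀ j, r j < d j) (hagree : ∀ j j', r j ≤ r j' → d j ≤ d j')
    (S : NoMigSchedule ι m w r d) {t j : ι} (htj : t ≤ j) :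
    r t + ∑ i ∈ machineWindow S.proc t j, volume.real (S.A i) + volume.real (S.A j) ≤ d j := by
  have hwin :
      ∀ i ∈ insert j (machineWindow S.proc t j), t ≤ i ∧ i ≤ j ∧ S.proc i = S.proc j := by
    intro i hi
    simp only [machineWindow, Finset.mem_insert, Finset.mem_filter, Finset.mem_univ,
      true_and] at hi
    rcases hi with rfl | ⟨hti, hij, hic⟩
    exacts [⟨htj, le_rfl, rfl⟩, ⟨hti, hij.le, hic⟩]
  have hsum := sum_measureReal_le_of_subset (μ := volume) (B := Icc (r t) (d j))
    (fun i _ ↦ S.measurableSet_A i)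
    (fun i hi i' hi' hne ↦ S.disjoint_jobs i i' hne ((hwin i hi).2.2.trans (hwin i' hi').2.2.symm))
    (fun i hi ↦ (S.A_subset i).trans (Icc_subset_Icc (hr (hwin i hi).1)
      (hagree i j (hr (hwin i hi).2.1))))
    measure_Icc_lt_top.ne
  rw [Finset.sum_insert (by simp [machineWindow]),
    Real.volume_real_Icc_of_le ((hr htj).trans (hrd j).le)] at hsum
  linarith

theorem NoMigSchedule.exists_npSchedule (hw : ∀ j, 0 < w j) (hrd : ∀ j, r j < d j)
    (hagree : ∀ j j', r j ≤ r j' → d j ≤ d j') (S : NoMigSchedule ι m w r d) :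
    ∃ T : NPSchedule ι m w r d, ∀ j, T.len j = volume.real (S.A j) := by
  obtain ⟨_, hr⟩ := exists_linearOrder_monotone r
  have hp : 0 ≤ fun j ↦ volume.real (S.A j) := fun j ↦ measureReal_nonneg
  exact ⟨{ proc := S.proc
           start := listStart S.proc r fun j ↦ volume.real (S.A j)
           len := fun j ↦ volume.real (S.A j)
           len_pos := S.measureReal_A_pos hw
           start_ge := le_listStart hp
           end_le := fun _ ↦ listStart_add_le fun _ htj _ ↦
             S.add_sum_machineWindow_le_deadline hr hrd hagree htj
           disjoint_jobs := fun j j' ↦ disjoint_Ioo_listStart hp }, fun _ ↦ rfl⟩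

lemma npEnergy_eq_nmEnergy (α : ℝ) (T : NPSchedule ι m w r d) (S : NoMigSchedule ι m w r d)
    (h : ∀ j, T.len j = volume.real (S.A j)) : npEnergy α T = nmEnergy α S := by
  refine Finset.sum_congr rfl fun j _ ↦ ?_
  rw [← S.work_done j, ← measureReal_def, ← h j, mul_div_cancel_right₀ _ (T.len_pos j).ne']

noncomputable def NPSchedule.toNoMigSchedule (hw : ∀ j, 0 < w j) (T : NPSchedule ι m w r d) :
    NoMigSchedule ι m w r d where
  proc := T.proc
  A j := Ioo (T.start j) (T.start j + T.len j)
  speed j := w j / T.len j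
  speed_pos j := div_pos (hw j) (T.len_pos j)
  measurableSet_A _ := measurableSet_Ioo
  A_subset j := Ioo_subset_Icc_self.trans (Icc_subset_Icc (T.start_ge j) (T.end_le j))
  disjoint_jobs := T.disjoint_jobs
  work_done j := by
    rw [← measureReal_def, Real.volume_real_Ioo_of_le (by linarith [T.len_pos j]),
      add_sub_cancel_left, div_mul_cancel₀ _ (T.len_pos j).ne']

end Schedules

theorem agreeable_no_migration_eq_nonpreemptive_general (ι : Type) [Fintype ι]
    (α : ℝ) (m : ℕ) (w r d : ι → ℝ)
    (hw : ∀ j, 0 < w j) (hrd : ∀ j, r j < d j)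
    (hagree : ∀ j j', r j ≤ r j' → d j ≤ d j') :
    (∀ S : NoMigSchedule ι m w r d,
      ∃ Snpr : NPSchedule ι m w r d,
        (∀ j, Snpr.len j = (volume (S.A j)).toReal) ∧
        npEnergy α Snpr = nmEnergy α S) ∧
    sInf {E | ∃ Snpr : NPSchedule ι m w r d, npEnergy α Snpr = E} =
      sInf {E | ∃ S : NoMigSchedule ι m w r d, nmEnergy α S = E} := by
  have hnp : ∀ S : NoMigSchedule ι m w r d, ∃ Snpr : NPSchedule ι m w r d,
      (∀ j, Snpr.len j = (volume (S.A j)).toReal) ∧ npEnergy α Snpr = nmEnergy α S := fun S ↦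
    let ⟨T, hT⟩ := S.exists_npSchedule hw hrd hagree
    ⟨T, hT, npEnergy_eq_nmEnergy α T S hT⟩
  refine ⟨hnp, congrArg sInf (Set.ext fun E ↦ ⟨?_, ?_⟩)⟩
  · rintro ⟨T, rfl⟩
    exact ⟨T.toNoMigSchedule hw, rfl⟩
  · rintro ⟨S, rfl⟩
    obtain ⟨T, -, hT⟩ := hnp S
    exact ⟨T, hT⟩

/-- For agreeable instances, preemption without migration gives no advantage over
non-preemptive scheduling: every feasible preemptive-no-migration schedule `S` can be
turned into a feasible non-preemptive schedule in which each job's processing time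
equals its total execution time `λ(A j)` in `S` (hence with the same energy), and the
minimum non-preemptive energy equals the minimum preemptive-no-migration energy. -/
theorem agreeable_no_migration_eq_nonpreemptive (ι : Type) [Fintype ι]
    (α : ℝ) (hα : 1 < α) (m : ℕ) (hm : 1 ≤ m) (w r d : ι → ℝ)
    (hw : ∀ j, 0 < w j) (hr : ∀ j, 0 ≤ r j) (hrd : ∀ j, r j < d j)
    (hagree : ∀ j j', r j ≤ r j' → d j ≤ d j') :
    (∀ S : NoMigSchedule ι m w r d,
      ∃ Snpr : NPSchedule ι m w r d,
        (∀ j, Snpr.len j = (volume (S.A j)).toReal) ∧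
        npEnergy α Snpr = nmEnergy α S) ∧
    sInf {E | ∃ Snpr : NPSchedule ι m w r d, npEnergy α Snpr = E} =
      sInf {E | ∃ S : NoMigSchedule ι m w r d, nmEnergy α S = E} :=
  agreeable_no_migration_eq_nonpreemptive_general ι α m w r d hw hrd hagree
end
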